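/- Let n ≥ 2, c₀ ≥ 1, and let O ⊂ ℝⁿ be a bounded open convex set. Let ξ and ξ̄ be convex functions, C² on O and continuous on the closure of O, with ξ = ξ̄ on ∂O, det(D²ξ(y)) = g(y) on O where 1/c₀ ≤ g ≤ c₀, and det(D²ξ̄(y)) = 1 on O. Then there is a constant C depending only on n and the diameter of O such that sup_O |ξ − ξ̄| ≤ C ( ∫_O |g(y)^{1/n} − 1|ⁿ dy )^{1/n}. -/

import Mathlib

/-!
For `v = ξ - ξ̄` (and symmetrically `ξ̄ - ξ`), the Alexandrov–Bakelman–Pucci argument controls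
`-v x`: every plane of slope `p` with `‖p‖ diam O < -v x` can be lowered until it touches the graph
of `v` at an interior point where `D²v ≥ 0`, so `∇v` maps this contact set onto a ball of radius
`-v x / diam O`, and the area formula bounds the volume of that ball by `∫ det D²v` over the contact
set. There `D²ξ = D²ξ̄ + D²v` is a sum of positive semidefinite matrices, and Minkowski's inequality
`det (A + B)^(1/n) ≥ det A^(1/n) + det B^(1/n)` (the concavity of `det^(1/n)`) gives
`det D²v ≤ |g^(1/n) - 1|^n`.
-/

open Filter Bornology Matrix MeasureTheory
open scoped RealInnerProductSpace

noncomputable section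

/-- `ℝⁿ` as a Euclidean space. -/
abbrev En (n : ℕ) := EuclideanSpace ℝ (Fin n)

/-- The Hessian matrix `D²u(x)` of `u : ℝⁿ → ℝ` at `x`. -/
def Hess {n : ℕ} (u : En n → ℝ) (x : En n) : Matrix (Fin n) (Fin n) ℝ :=
  Matrix.of fun i j =>
    iteratedFDeriv ℝ 2 u x ![EuclideanSpace.single i 1, EuclideanSpace.single j 1]

open scoped Topology

theorem Real.geom_mean_le_arith_mean_univ {ι : Type*} [Fintype ι] [Nonempty ι] {z : ι → ℝ}
    (hz : ∀ i, 0 ≤ z i) :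
    (∏ i, z i) ^ (1 / Fintype.card ι : ℝ) ≤ ∑ i, (1 / Fintype.card ι : ℝ) * z i := by
  have hw : ∑ _i : ι, (1 / Fintype.card ι : ℝ) = 1 := by simp
  rw [← Real.finsetProd_rpow _ _ fun i _ => hz i]
  exact Real.geom_mean_le_arith_mean_weighted _ _ _ (fun _ _ => by positivity) hw fun i _ => hz i

theorem Real.one_add_prod_rpow_le_prod_one_add_rpow {ι : Type*} [Fintype ι] [Nonempty ι]
    {μ : ι → ℝ} (hμ : ∀ i, 0 ≤ μ i) :
    1 + (∏ i, μ i) ^ (1 / Fintype.card ι : ℝ) ≤ (∏ i, (1 + μ i)) ^ (1 / Fintype.card ι : ℝ) := by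
  have hpos : ∀ i, 0 < 1 + μ i := fun i => by linarith [hμ i]
  have hP : 0 < ∏ i, (1 + μ i) := Finset.prod_pos fun i _ => hpos i
  have hprod : 0 ≤ ∏ i, μ i := Finset.prod_nonneg fun i _ => hμ i
  -- AM-GM applied to `1 / (1 + μ i)` and to `μ i / (1 + μ i)`, which add up to `1`
  have h₁ := Real.geom_mean_le_arith_mean_univ fun i => (one_div_pos.2 (hpos i)).le
  have h₂ := Real.geom_mean_le_arith_mean_univ fun i => div_nonneg (hμ i) (hpos i).le
  have hsum : ∑ i, (1 / Fintype.card ι : ℝ) * (1 / (1 + μ i)) +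
      ∑ i, (1 / Fintype.card ι : ℝ) * (μ i / (1 + μ i)) = 1 := by
    rw [← Finset.sum_add_distrib]
    have : ∀ i, (1 / Fintype.card ι : ℝ) * (1 / (1 + μ i)) +
        (1 / Fintype.card ι : ℝ) * (μ i / (1 + μ i)) = 1 / Fintype.card ι := fun i => by
      field_simp [(hpos i).ne']
    simp only [this, Finset.sum_const, Finset.card_univ, nsmul_eq_mul]
    field_simp
  rw [Finset.prod_div_distrib, Finset.prod_const_one, Real.div_rpow zero_le_one hP.le,
    Real.one_rpow] at h₁
  rw [Finset.prod_div_distrib, Real.div_rpow hprod hP.le] at h₂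
  rw [← div_le_one (Real.rpow_pos_of_pos hP _), add_div]
  linarith

namespace Matrix

variable {ι : Type*} [Fintype ι]

theorem isClosed_setOf_posSemidef : IsClosed {A : Matrix ι ι ℝ | A.PosSemidef} := by
  simp only [posSemidef_iff_dotProduct_mulVec, Set.ofPred_and, Set.ofPred_forall]
  exact (isClosed_eq continuous_id.matrix_conjTranspose continuous_id).inter <|
    isClosed_iInter fun x => isClosed_le continuous_const <|
      continuous_const.dotProduct (continuous_id.matrix_mulVec continuous_const)

instance : MeasurableSpace (Matrix ι ι ℝ) := inferInstanceAs (MeasurableSpace (ι → ι → ℝ))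

instance : BorelSpace (Matrix ι ι ℝ) := inferInstanceAs (BorelSpace (ι → ι → ℝ))

section Minkowski

open scoped MatrixOrder

variable [DecidableEq ι] [Nonempty ι]

theorem PosSemidef.one_add_det_rpow_le {D : Matrix ι ι ℝ} (hD : D.PosSemidef) :
    1 + D.det ^ (1 / Fintype.card ι : ℝ) ≤ (1 + D).det ^ (1 / Fintype.card ι : ℝ) := by
  set U := hD.1.eigenvectorUnitary
  have hU : (U : Matrix ι ι ℝ) * star (U : Matrix ι ι ℝ) = 1 := mem_unitaryGroup_iff.1 U.2
  have h1D : 1 + D = Unitary.conjStarAlgAut ℝ _ U (diagonal fun i => 1 + hD.1.eigenvalues i) := by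
    conv_lhs => rw [hD.1.spectral_theorem]
    rw [← map_one (Unitary.conjStarAlgAut ℝ _ U), ← map_add, ← diagonal_one, diagonal_add]
    rfl
  rw [h1D, Unitary.conjStarAlgAut_apply, det_mul, det_mul, mul_right_comm, ← det_mul, hU, det_one,
    one_mul, det_diagonal, hD.1.det_eq_prod_eigenvalues]
  exact Real.one_add_prod_rpow_le_prod_one_add_rpow hD.eigenvalues_nonneg

theorem PosSemidef.det_rpow_add_le_of_det_pos {B C : Matrix ι ι ℝ} (hB : B.PosSemidef)
    (hB₀ : 0 < B.det) (hC : C.PosSemidef) :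
    B.det ^ (1 / Fintype.card ι : ℝ) + C.det ^ (1 / Fintype.card ι : ℝ) ≤
      (B + C).det ^ (1 / Fintype.card ι : ℝ) := by
  -- write `B + C = R (1 + D) R` with `R = √B` and `D = R⁻¹ C R⁻¹`
  set R := CFC.sqrt B
  have hR : R.IsHermitian := (CFC.sqrt_nonneg B).posSemidef.1
  have hRR : R * R = B := CFC.sqrt_mul_sqrt_self B hB.nonneg
  have hRdet : R.det * R.det = B.det := by rw [← det_mul, hRR]
  have hRunit : IsUnit R.det := isUnit_iff_ne_zero.2 fun h => by
    rw [h, zero_mul] at hRdet; linarith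
  set D := R⁻¹ * C * R⁻¹
  have hD : D.PosSemidef := by
    simpa only [hR.inv.eq] using hC.mul_mul_conjTranspose_same R⁻¹
  have hBC : B + C = R * (1 + D) * R := by
    rw [Matrix.mul_add, Matrix.add_mul, Matrix.mul_one, hRR]
    simp only [D, ← Matrix.mul_assoc, mul_nonsing_inv R hRunit, Matrix.one_mul]
    rw [Matrix.mul_assoc, nonsing_inv_mul R hRunit, Matrix.mul_one]
  have hDdet : D.det = C.det / B.det := by
    rw [det_mul, det_mul, det_nonsing_inv, Ring.inverse_eq_inv', ← hRdet]
    field_simp [hRunit.ne_zero]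
  have hBCdet : (B + C).det = B.det * (1 + D).det := by
    rw [hBC, det_mul, det_mul, ← hRdet]; ring
  have h := hD.one_add_det_rpow_le
  rw [hDdet, Real.div_rpow hC.det_nonneg hB₀.le] at h
  have hBp : 0 < B.det ^ (1 / Fintype.card ι : ℝ) := Real.rpow_pos_of_pos hB₀ _
  calc B.det ^ (1 / Fintype.card ι : ℝ) + C.det ^ (1 / Fintype.card ι : ℝ)
      = B.det ^ (1 / Fintype.card ι : ℝ) *
          (1 + C.det ^ (1 / Fintype.card ι : ℝ) / B.det ^ (1 / Fintype.card ι : ℝ)) := by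
        field_simp
    _ ≤ B.det ^ (1 / Fintype.card ι : ℝ) * (1 + D).det ^ (1 / Fintype.card ι : ℝ) := by gcongr
    _ = (B + C).det ^ (1 / Fintype.card ι : ℝ) := by
        rw [hBCdet, Real.mul_rpow hB₀.le (PosSemidef.one.add hD).det_nonneg]

/-- **Minkowski's determinant inequality**. -/
theorem PosSemidef.det_rpow_add_le {B C : Matrix ι ι ℝ} (hB : B.PosSemidef) (hC : C.PosSemidef) :
    B.det ^ (1 / Fintype.card ι : ℝ) + C.det ^ (1 / Fintype.card ι : ℝ) ≤
      (B + C).det ^ (1 / Fintype.card ι : ℝ) := by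
  rcases hB.det_nonneg.lt_or_eq with hB₀ | hB₀
  · exact hB.det_rpow_add_le_of_det_pos hB₀ hC
  rcases hC.det_nonneg.lt_or_eq with hC₀ | hC₀
  · simpa only [add_comm] using hC.det_rpow_add_le_of_det_pos hC₀ hB
  rw [← hB₀, ← hC₀, Real.zero_rpow (by simp), zero_add]
  exact Real.rpow_nonneg (hB.add hC).det_nonneg _

theorem PosSemidef.det_le_pow_abs_det_rpow_add_sub {B C : Matrix ι ι ℝ} (hB : B.PosSemidef)
    (hC : C.PosSemidef) :
    C.det ≤ |(B + C).det ^ (1 / Fintype.card ι : ℝ) - B.det ^ (1 / Fintype.card ι : ℝ)| ^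
      Fintype.card ι := by
  have hCp : 0 ≤ C.det ^ (1 / Fintype.card ι : ℝ) := Real.rpow_nonneg hC.det_nonneg _
  calc C.det = (C.det ^ (1 / Fintype.card ι : ℝ)) ^ Fintype.card ι := by
        rw [one_div, Real.rpow_inv_natCast_pow hC.det_nonneg Fintype.card_ne_zero]
    _ ≤ _ := by
        gcongr
        rw [le_abs]
        left
        linarith [hB.det_rpow_add_le hC]

end Minkowski

end Matrix

section Calculus

theorem IsLocalMin.nonneg_of_hasDerivAt {f f' : ℝ → ℝ} {a x : ℝ} (h : IsLocalMin f x)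
    (hf : ∀ᶠ y in 𝓝 x, HasDerivAt f (f' y) y) (hf' : HasDerivAt f' a x) : 0 ≤ a := by
  -- if `a < 0`, the second-derivative test makes `x` a local maximum as well, so `f` is locally
  -- constant and `a = 0`
  by_contra! ha
  have hderiv : deriv f =ᶠ[𝓝 x] f' := hf.mono fun y hy => hy.deriv
  have hmax : IsLocalMax f x :=
    isLocalMax_of_deriv_deriv_neg (by rwa [hderiv.deriv_eq, hf'.deriv])
      (by rw [hderiv.eq_of_nhds]; exact h.hasDerivAt_eq_zero hf.self_of_nhds)
      hf.self_of_nhds.continuousAt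
  have hconst : ∀ᶠ y in 𝓝 x, f y = f x := (hmax.and h).mono fun y hy => le_antisymm hy.1 hy.2
  have hzero : f' =ᶠ[𝓝 x] fun _ => 0 := by
    filter_upwards [hconst.eventually_nhds, hf] with y hy hfy
    exact hfy.unique ((hasDerivAt_const y (f x)).congr_of_eventuallyEq hy)
  exact ha.ne (hf'.unique ((hasDerivAt_const x 0).congr_of_eventuallyEq hzero))

variable {E : Type*} [NormedAddCommGroup E] [NormedSpace ℝ E]

theorem IsLocalMin.second_fderiv_nonneg {f : E → ℝ} {f' : E → E →L[ℝ] ℝ}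
    {f'' : E →L[ℝ] E →L[ℝ] ℝ} {x : E} (h : IsLocalMin f x)
    (hf : ∀ᶠ y in 𝓝 x, HasFDerivAt f (f' y) y) (hf' : HasFDerivAt f' f'' x) (v : E) :
    0 ≤ f'' v v := by
  set L : ℝ → E := fun t => x + t • v
  have hL : ∀ t, HasDerivAt L v t := fun t => by
    convert ((hasDerivAt_id' t).smul_const v).const_add x using 1
    rw [one_smul]
  have hL0 : L 0 = x := by simp [L]
  have hLt : Tendsto L (𝓝 0) (𝓝 x) := hL0 ▸ (hL 0).continuousAt.tendsto
  refine IsLocalMin.nonneg_of_hasDerivAt (f := f ∘ L) (f' := fun t => f' (L t) v) (x := 0) ?_ ?_ ?_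
  · exact (hL0 ▸ h).comp_continuous (hL 0).continuousAt
  · filter_upwards [hLt.eventually hf] with t ht using ht.comp_hasDerivAt t (hL t)
  · exact (ContinuousLinearMap.apply ℝ ℝ v).hasFDerivAt.comp_hasDerivAt 0
      ((hL0 ▸ hf').comp_hasDerivAt 0 (hL 0))

theorem ConvexOn.isMinOn_sub_of_hasFDerivAt {s : Set E} {f : E → ℝ} {f' : E →L[ℝ] ℝ} {x : E}
    (hf : ConvexOn ℝ s f) (hx : x ∈ s) (hf' : HasFDerivAt f f' x) :
    IsMinOn (fun y => f y - f' y) s x := by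
  intro y hy
  set γ : ℝ →ᵃ[ℝ] E := AffineMap.lineMap x y
  have hγ0 : γ 0 = x := AffineMap.lineMap_apply_zero x y
  have hderiv : HasDerivAt (f ∘ γ) (f' (y - x)) 0 :=
    (hγ0 ▸ hf').comp_hasDerivAt (0 : ℝ) AffineMap.hasDerivAt_lineMap
  have := (hf.comp_affineMap γ).le_slope_of_hasDerivAt (x := 0) (y := 1) (by simpa [hγ0])
    (by simpa [γ]) zero_lt_one hderiv
  have hγ1 : γ 1 = y := AffineMap.lineMap_apply_one x y
  simp only [slope, Function.comp_apply, hγ0, hγ1, vsub_eq_sub, sub_zero, inv_one, one_smul,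
    map_sub] at this
  simp only [Set.mem_ofPred_eq]
  linarith

end Calculus

section Hessian

variable {n : ℕ}

theorem Hess_eq_fderiv_fderiv (u : En n → ℝ) (x : En n) :
    Hess u x = Matrix.of fun i j =>
      fderiv ℝ (fderiv ℝ u) x (EuclideanSpace.single i 1) (EuclideanSpace.single j 1) := by
  ext i j
  simp [Hess, iteratedFDeriv_two_apply]

theorem measurable_Hess (u : En n → ℝ) : Measurable (Hess u) := by
  have hΦ : Continuous fun T : En n →L[ℝ] En n →L[ℝ] ℝ =>
      Matrix.of fun i j => T (EuclideanSpace.single i 1) (EuclideanSpace.single j 1) := by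
    fun_prop
  exact funext (Hess_eq_fderiv_fderiv u) ▸ hΦ.measurable.comp (measurable_fderiv ℝ _)

theorem Hess_sub {f h : En n → ℝ} {x : En n} (hf : ContDiffAt ℝ 2 f x) (hh : ContDiffAt ℝ 2 h x) :
    Hess (f - h) x = Hess f x - Hess h x := by
  ext i j
  simp [Hess, iteratedFDeriv_sub_apply hf hh]

theorem Hess_posSemidef_of_forall_nonneg {u : En n → ℝ} {x : En n} (hu : ContDiffAt ℝ 2 u x)
    (h : ∀ v, 0 ≤ fderiv ℝ (fderiv ℝ u) x v v) : (Hess u x).PosSemidef := by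
  have hsymm := hu.isSymmSndFDerivAt (by simp)
  rw [Matrix.posSemidef_iff_dotProduct_mulVec, Hess_eq_fderiv_fderiv]
  refine ⟨?_, fun c => ?_⟩
  · ext i j
    exact hsymm _ _
  · refine (h (∑ i, c i • EuclideanSpace.single i 1)).trans_eq ?_
    simp only [map_sum, map_smul, _root_.sum_apply, _root_.smul_apply,
      smul_eq_mul, dotProduct, mulVec, Matrix.of_apply, star_trivial, Finset.mul_sum]
    exact Finset.sum_congr rfl fun i _ => Finset.sum_congr rfl fun j _ => by rw [hsymm]; ring

theorem Hess_posSemidef_of_isLocalMin_sub {u : En n → ℝ} {x : En n} (hu : ContDiffAt ℝ 2 u x)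
    (ℓ : En n →L[ℝ] ℝ) (h : IsLocalMin (fun y => u y - ℓ y) x) : (Hess u x).PosSemidef := by
  refine Hess_posSemidef_of_forall_nonneg hu fun v =>
    h.second_fderiv_nonneg (f' := fun y => fderiv ℝ u y - ℓ) ?_ ?_ v
  · filter_upwards [hu.eventually (by simp)] with y hy
    exact (hy.differentiableAt two_ne_zero).hasFDerivAt.sub ℓ.hasFDerivAt
  · exact ((hu.fderiv_right (m := 1) le_rfl).differentiableAt one_ne_zero).hasFDerivAt.sub_const ℓ

theorem ConvexOn.Hess_posSemidef {s : Set (En n)} {u : En n → ℝ} {x : En n}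
    (hconv : ConvexOn ℝ s u) (hs : s ∈ 𝓝 x) (hu : ContDiffAt ℝ 2 u x) : (Hess u x).PosSemidef :=
  Hess_posSemidef_of_isLocalMin_sub hu _ <|
    (hconv.isMinOn_sub_of_hasFDerivAt (mem_of_mem_nhds hs)
      (hu.differentiableAt two_ne_zero).hasFDerivAt).isLocalMin hs

theorem toDual_symm_apply_single (ℓ : StrongDual ℝ (En n)) (i : Fin n) :
    (InnerProductSpace.toDual ℝ (En n)).symm ℓ i = ℓ (EuclideanSpace.single i 1) := by
  rw [← InnerProductSpace.toDual_symm_apply, EuclideanSpace.inner_single_right]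
  simp

theorem ContDiffAt.exists_hasFDerivAt_gradient_det_eq {u : En n → ℝ} {x : En n}
    (hu : ContDiffAt ℝ 2 u x) :
    ∃ J : En n →L[ℝ] En n, HasFDerivAt (gradient u) J x ∧ J.det = (Hess u x).det := by
  set T : StrongDual ℝ (En n) →L[ℝ] En n :=
    (InnerProductSpace.toDual ℝ (En n)).symm.toContinuousLinearEquiv.toContinuousLinearMap
  have hu' := ((hu.fderiv_right (m := 1) le_rfl).differentiableAt one_ne_zero).hasFDerivAt
  refine ⟨T ∘L fderiv ℝ (fderiv ℝ u) x, T.hasFDerivAt.comp x hu', ?_⟩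
  set b := (EuclideanSpace.basisFun (Fin n) ℝ).toBasis
  have hmat : LinearMap.toMatrix b b (T ∘L fderiv ℝ (fderiv ℝ u) x).toLinearMap = (Hess u x)ᵀ := by
    ext i j
    rw [LinearMap.toMatrix_apply, Hess_eq_fderiv_fderiv]
    simpa [b, T] using
      toDual_symm_apply_single (fderiv ℝ (fderiv ℝ u) x (EuclideanSpace.single j 1)) i
  rw [ContinuousLinearMap.det, ← LinearMap.det_toMatrix b, hmat, Matrix.det_transpose]

end Hessian

section Alexandrov

variable {n : ℕ} {O : Set (En n)} {v : En n → ℝ} {r : ℝ} {x : En n}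

theorem ball_subset_gradient_image_posSemidef (hO : IsOpen O) (hOb : IsBounded O) (hr : 0 < r)
    (hdiam : Metric.diam O ≤ r) (hv : ContDiffOn ℝ 2 v O) (hvc : ContinuousOn v (closure O))
    (hv0 : ∀ z ∈ frontier O, v z = 0) (hx : x ∈ O) :
    Metric.ball 0 (-v x / r) ⊆ gradient v '' {y ∈ O | (Hess v y).PosSemidef} := by
  intro p hp
  rw [mem_ball_zero_iff, lt_div_iff₀ hr] at hp
  set ℓ := InnerProductSpace.toDual ℝ (En n) p
  -- the plane of slope `p` supporting the graph of `v` from below touches it inside `O`,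
  -- because `v = 0` on `frontier O` and `‖p‖ * diam O < -v x`
  obtain ⟨y₀, hy₀, hmin⟩ := hOb.isCompact_closure.exists_isMinOn ⟨x, subset_closure hx⟩
    (hvc.sub ℓ.continuous.continuousOn)
  have hy₀O : y₀ ∈ O := by
    by_contra hy₀O
    have hvy₀ : v y₀ = 0 := hv0 y₀ ⟨hy₀, by rwa [hO.interior_eq]⟩
    have hxy₀ : ‖x - y₀‖ ≤ r := by
      rw [← dist_eq_norm]
      exact (Metric.dist_le_diam_of_mem hOb.closure (subset_closure hx) hy₀).trans
        (by rwa [Metric.diam_closure])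
    have h₁ : v y₀ - ℓ y₀ ≤ v x - ℓ x := hmin (subset_closure hx)
    have h₂ : |ℓ (x - y₀)| ≤ ‖p‖ * r := by
      rw [InnerProductSpace.toDual_apply_apply]
      exact (abs_real_inner_le_norm p _).trans (by gcongr)
    rw [map_sub] at h₂
    linarith [neg_abs_le (ℓ x - ℓ y₀)]
  have hvy₀ : ContDiffAt ℝ 2 v y₀ := hv.contDiffAt (hO.mem_nhds hy₀O)
  have hloc : IsLocalMin (fun y => v y - ℓ y) y₀ :=
    hmin.isLocalMin (mem_of_superset (hO.mem_nhds hy₀O) subset_closure)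
  refine ⟨y₀, ⟨hy₀O, Hess_posSemidef_of_isLocalMin_sub hvy₀ ℓ hloc⟩, ?_⟩
  have hderiv := (hvy₀.differentiableAt two_ne_zero).hasFDerivAt
  rw [sub_eq_zero.1 (hloc.hasFDerivAt_eq_zero (hderiv.sub ℓ.hasFDerivAt))] at hderiv
  exact (hasGradientAt_iff_hasFDerivAt.2 hderiv).gradient

theorem volume_gradient_image_le (hO : IsOpen O) (hv : ContDiffOn ℝ 2 v O) {s : Set (En n)}
    (hs : MeasurableSet s) (hsO : s ⊆ O) :
    volume (gradient v '' s) ≤ ∫⁻ y in s, ENNReal.ofReal |(Hess v y).det| := by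
  choose! J hJ using fun y (hy : y ∈ s) =>
    (hv.contDiffAt (hO.mem_nhds (hsO hy))).exists_hasFDerivAt_gradient_det_eq
  calc volume (gradient v '' s) ≤ ∫⁻ y in s, ENNReal.ofReal |(J y).det| :=
        addHaar_image_le_lintegral_abs_det_fderiv volume hs fun y hy =>
          (hJ y hy).1.hasFDerivWithinAt
    _ = ∫⁻ y in s, ENNReal.ofReal |(Hess v y).det| :=
        setLIntegral_congr_fun hs fun y hy => by rw [(hJ y hy).2]

/-- The **Alexandrov–Bakelman–Pucci estimate**. -/
theorem volume_ball_le_lintegral_of_det_Hess_le (hO : IsOpen O) (hOb : IsBounded O) (hr : 0 < r)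
    (hdiam : Metric.diam O ≤ r) (hv : ContDiffOn ℝ 2 v O) (hvc : ContinuousOn v (closure O))
    (hv0 : ∀ z ∈ frontier O, v z = 0) {k : En n → ℝ}
    (hk : ∀ y ∈ O, (Hess v y).PosSemidef → (Hess v y).det ≤ k y) (hx : x ∈ O) :
    volume (Metric.ball (0 : En n) (-v x / r)) ≤ ∫⁻ y in O, ENNReal.ofReal (k y) := by
  set Γ := {y ∈ O | (Hess v y).PosSemidef}
  have hΓ : MeasurableSet Γ :=
    hO.measurableSet.inter <|
      Matrix.isClosed_setOf_posSemidef.measurableSet.preimage (measurable_Hess v)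
  calc volume (Metric.ball (0 : En n) (-v x / r))
      ≤ volume (gradient v '' Γ) :=
        measure_mono (ball_subset_gradient_image_posSemidef hO hOb hr hdiam hv hvc hv0 hx)
    _ ≤ ∫⁻ y in Γ, ENNReal.ofReal |(Hess v y).det| :=
        volume_gradient_image_le hO hv hΓ fun y hy => hy.1
    _ ≤ ∫⁻ y in Γ, ENNReal.ofReal (k y) := setLIntegral_mono' hΓ fun y hy =>
        ENNReal.ofReal_le_ofReal (by rw [abs_of_nonneg hy.2.det_nonneg]; exact hk y hy.1 hy.2)
    _ ≤ ∫⁻ y in O, ENNReal.ofReal (k y) := lintegral_mono_set fun y hy => hy.1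

end Alexandrov

theorem le_mul_rpow_of_volume_ball_le {n : ℕ} (hn : n ≠ 0) {ρ I : ℝ} (hI : 0 ≤ I)
    (h : volume (Metric.ball (0 : En n) ρ) ≤ ENNReal.ofReal I) :
    ρ ≤ (volume (Metric.ball (0 : En n) 1)).toReal⁻¹ ^ (1 / n : ℝ) * I ^ (1 / n : ℝ) := by
  rcases le_or_gt ρ 0 with hρ | hρ
  · exact hρ.trans (by positivity)
  have : Nonempty (Fin n) := ⟨⟨0, Nat.pos_of_ne_zero hn⟩⟩
  set ω := (volume (Metric.ball (0 : En n) 1)).toReal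
  have hω : 0 < ω := ENNReal.toReal_pos (Metric.measure_ball_pos volume 0 one_pos).ne'
    measure_ball_lt_top.ne
  rw [Measure.addHaar_ball _ _ hρ.le, finrank_euclideanSpace_fin,
    ← ENNReal.ofReal_toReal measure_ball_lt_top.ne, ← ENNReal.ofReal_mul (by positivity),
    ENNReal.ofReal_le_ofReal_iff hI] at h
  calc ρ = (ρ ^ n) ^ (1 / n : ℝ) := by
        rw [one_div, Real.pow_rpow_inv_natCast hρ.le hn]
    _ ≤ (ω⁻¹ * I) ^ (1 / n : ℝ) := by
        gcongr
        rwa [inv_mul_eq_div, le_div_iff₀ hω]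
    _ = ω⁻¹ ^ (1 / n : ℝ) * I ^ (1 / n : ℝ) := Real.mul_rpow (by positivity) hI

theorem sub_le_of_eq_on_frontier {n : ℕ} (hn : n ≠ 0) {O : Set (En n)} {u w k : En n → ℝ}
    {r : ℝ} {x : En n} (hO : IsOpen O) (hOb : IsBounded O) (hr : 0 < r)
    (hdiam : Metric.diam O ≤ r) (hu : ContDiffOn ℝ 2 u O) (huc : ContinuousOn u (closure O))
    (hw : ContDiffOn ℝ 2 w O) (hwc : ContinuousOn w (closure O))
    (hw_psd : ∀ y ∈ O, (Hess w y).PosSemidef) (hbd : ∀ z ∈ frontier O, u z = w z)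
    (hk : IntegrableOn k O)
    (hku : ∀ y ∈ O, |(Hess u y).det ^ (1 / n : ℝ) - (Hess w y).det ^ (1 / n : ℝ)| ^ n ≤ k y)
    (hx : x ∈ O) :
    w x - u x ≤
      r * (volume (Metric.ball (0 : En n) 1)).toReal⁻¹ ^ (1 / n : ℝ) *
        (∫ y in O, k y) ^ (1 / n : ℝ) := by
  have : Nonempty (Fin n) := ⟨⟨0, Nat.pos_of_ne_zero hn⟩⟩
  have hdet : ∀ y ∈ O, (Hess (u - w) y).PosSemidef → (Hess (u - w) y).det ≤ k y := by
    intro y hy hpsd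
    rw [Hess_sub (hu.contDiffAt (hO.mem_nhds hy)) (hw.contDiffAt (hO.mem_nhds hy))] at hpsd ⊢
    have h := (hw_psd y hy).det_le_pow_abs_det_rpow_add_sub hpsd
    rw [add_sub_cancel, Fintype.card_fin] at h
    exact h.trans (hku y hy)
  have hk₀ : ∀ y ∈ O, 0 ≤ k y := fun y hy => (by positivity : (0 : ℝ) ≤ _).trans (hku y hy)
  have hball := volume_ball_le_lintegral_of_det_Hess_le hO hOb hr hdiam (hu.sub hw) (huc.sub hwc)
    (fun z hz => sub_eq_zero.2 (hbd z hz)) hdet hx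
  rw [← ofReal_integral_eq_lintegral_ofReal hk (ae_restrict_of_forall_mem hO.measurableSet hk₀)]
    at hball
  have hρ := le_mul_rpow_of_volume_ball_le hn (setIntegral_nonneg hO.measurableSet hk₀) hball
  calc w x - u x = r * (-(u x - w x) / r) := by field_simp; ring
    _ ≤ _ := by rw [mul_assoc]; gcongr

theorem integrableOn_abs_rpow_sub_one_pow {n : ℕ} {O : Set (En n)} {u g : En n → ℝ} {c : ℝ}
    (hO : MeasurableSet O) (hOfin : volume O ≠ ⊤) (hg : ∀ y ∈ O, (Hess u y).det = g y)
    (hg₀ : ∀ y ∈ O, 0 ≤ g y) (hgc : ∀ y ∈ O, g y ≤ c) :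
    IntegrableOn (fun y => |g y ^ (1 / n : ℝ) - 1| ^ n) O := by
  have hmeas : Measurable fun y => |(Hess u y).det ^ (1 / n : ℝ) - 1| ^ n := by
    have := continuous_id.matrix_det.measurable.comp (measurable_Hess u)
    fun_prop
  refine (Measure.integrableOn_of_bounded (M := (c ^ (1 / n : ℝ) + 1) ^ n) hOfin
    hmeas.aestronglyMeasurable (ae_restrict_of_forall_mem hO fun y hy => ?_)).congr_fun
    (fun y hy => by simp only [hg y hy]) hO
  have hgy := hg₀ y hy
  rw [hg y hy, Real.norm_eq_abs, abs_pow, abs_abs]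
  gcongr
  refine (abs_sub _ _).trans ?_
  rw [abs_one, abs_of_nonneg (by positivity)]
  gcongr
  exact hgc y hy

theorem alexandrov_comparison_general
    (n : ℕ) (hn : 2 ≤ n) (c₀ : ℝ) (r : ℝ) (hr : 0 < r) :
    ∃ C > (0 : ℝ), ∀ (O : Set (En n)) (ξ ξb g : En n → ℝ),
      IsOpen O → Bornology.IsBounded O → Convex ℝ O → Metric.diam O ≤ r →
      ConvexOn ℝ (closure O) ξ → ContDiffOn ℝ 2 ξ O → ContinuousOn ξ (closure O) →
      ConvexOn ℝ (closure O) ξb → ContDiffOn ℝ 2 ξb O → ContinuousOn ξb (closure O) →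
      (∀ x ∈ frontier O, ξ x = ξb x) →
      (∀ y ∈ O, (Hess ξ y).det = g y) →
      (∀ y ∈ O, 1 / c₀ ≤ g y ∧ g y ≤ c₀) →
      (∀ y ∈ O, (Hess ξb y).det = 1) →
      ∀ x ∈ O, |ξ x - ξb x| ≤
        C * (∫ y in O, |g y ^ ((1 : ℝ) / n) - 1| ^ (n : ℕ)) ^ ((1 : ℝ) / n) := by
  have hn₀ : n ≠ 0 := by omega
  have hω : 0 < (volume (Metric.ball (0 : En n) 1)).toReal :=
    ENNReal.toReal_pos (Metric.measure_ball_pos volume 0 one_pos).ne' measure_ball_lt_top.ne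
  refine ⟨r * (volume (Metric.ball (0 : En n) 1)).toReal⁻¹ ^ ((1 : ℝ) / n), by positivity, ?_⟩
  intro O ξ ξb g hO hOb _ hdiam hξ hξ₂ hξc hξb hξb₂ hξbc hbd hg hgc hξb₁ x hx
  have hpsd : ∀ {u}, ConvexOn ℝ (closure O) u → ContDiffOn ℝ 2 u O →
      ∀ y ∈ O, (Hess u y).PosSemidef := fun hconv hu y hy =>
    hconv.Hess_posSemidef (mem_of_superset (hO.mem_nhds hy) subset_closure)
      (hu.contDiffAt (hO.mem_nhds hy))
  have hdet : ∀ y ∈ O, |(Hess ξ y).det ^ ((1 : ℝ) / n) - (Hess ξb y).det ^ ((1 : ℝ) / n)| =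
      |g y ^ ((1 : ℝ) / n) - 1| := fun y hy => by rw [hg y hy, hξb₁ y hy, Real.one_rpow]
  have hk := integrableOn_abs_rpow_sub_one_pow hO.measurableSet hOb.measure_lt_top.ne hg
    (fun y hy => hg y hy ▸ (hpsd hξ hξ₂ y hy).det_nonneg) fun y hy => (hgc y hy).2
  rw [abs_sub_le_iff]
  constructor
  · exact sub_le_of_eq_on_frontier hn₀ hO hOb hr hdiam hξb₂ hξbc hξ₂ hξc (hpsd hξ hξ₂)
      (fun z hz => (hbd z hz).symm) hk (fun y hy => by rw [abs_sub_comm, hdet y hy]) hx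
  · exact sub_le_of_eq_on_frontier hn₀ hO hOb hr hdiam hξ₂ hξc hξb₂ hξbc (hpsd hξb hξb₂) hbd hk
      (fun y hy => by rw [hdet y hy]) hx

/-- The Alexandrov-estimate comparison used in the proof of Theorem 1.2: the constant depends
only on `n` and (an upper bound `r` for) the diameter of `O`. -/
theorem alexandrov_comparison
    (n : ℕ) (hn : 2 ≤ n) (c₀ : ℝ) (hc₀ : 1 ≤ c₀) (r : ℝ) (hr : 0 < r) :
    ∃ C > (0 : ℝ), ∀ (O : Set (En n)) (ξ ξb g : En n → ℝ),
      IsOpen O → Bornology.IsBounded O → Convex ℝ O → Metric.diam O ≤ r →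
      ConvexOn ℝ (closure O) ξ → ContDiffOn ℝ 2 ξ O → ContinuousOn ξ (closure O) →
      ConvexOn ℝ (closure O) ξb → ContDiffOn ℝ 2 ξb O → ContinuousOn ξb (closure O) →
      (∀ x ∈ frontier O, ξ x = ξb x) →
      (∀ y ∈ O, (Hess ξ y).det = g y) →
      (∀ y ∈ O, 1 / c₀ ≤ g y ∧ g y ≤ c₀) →
      (∀ y ∈ O, (Hess ξb y).det = 1) →
      ∀ x ∈ O, |ξ x - ξb x| ≤
        C * (∫ y in O, |g y ^ ((1 : ℝ) / n) - 1| ^ (n : ℕ)) ^ ((1 : ℝ) / n) :=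
  alexandrov_comparison_general n hn c₀ r hr
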